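/- arXiv:2302.04715 — 5 statements merged into one kernel-verified Lean document; each statement's English description precedes it below -/
import Mathlib

section
/- Let L : (0,∞) → (0,∞) be a measurable slowly varying function in Karamata's sense that is locally integrable on [A,∞) for some A > 0. Then for every α < −1, the function t ↦ t^{α} L(t) is integrable on [x,∞) for all sufficiently large x, and −(∫_x^∞ t^{α} L(t) dt) / (x^{α+1} L(x)) → 1/(α+1) as x → ∞. (Lemma 1, part (4); Karamata's theorem.) -/
/-!
Write `h y = log L(e^y)`; slow variation says `h (y + u) - h y → 0` for every fixed `u`. By the
uniform convergence theorem (a Steinhaus-type measure argument) the convergence is uniform for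
`u ∈ [0, 1]`, and iterating this over `[1, e]` gives Potter's bound `L(λx) ≤ e^ε λ^ε L(x)` for
`λ ≥ 1` and large `x`. After the substitution `t = x s` the quotient becomes
`-∫_1^∞ s^α L(xs)/L(x) ds`, and Potter's bound with `α + ε < -1` dominates the integrand by an
integrable power, so dominated convergence gives the limit `-∫_1^∞ s^α ds = 1/(α+1)`.
-/

open Filter MeasureTheory Set Topology Real
open scoped Pointwise

theorem measure_liminf_le_liminf_measure {α : Type*} [MeasurableSpace α] (μ : Measure α)
    (s : ℕ → Set α) : μ (liminf s atTop) ≤ liminf (fun n => μ (s n)) atTop := by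
  rw [liminf_eq_iSup_iInf_of_nat, liminf_eq_iSup_iInf_of_nat]
  have hmono : Monotone fun n => ⨅ i ≥ n, s i := fun m n hmn =>
    biInf_mono fun i hi => le_trans hmn hi
  rw [iSup_eq_iUnion, hmono.measure_iUnion]
  exact iSup_mono fun n => le_iInf₂ fun i hi => measure_mono (biInf_le _ hi)

def closeShifts (h : ℝ → ℝ) (y δ : ℝ) : Set ℝ := Icc 0 2 ∩ {v | |h (y + v) - h y| < δ}

theorem measurableSet_closeShifts {h : ℝ → ℝ} (hm : Measurable h) (y δ : ℝ) :
    MeasurableSet (closeShifts h y δ) :=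
  measurableSet_Icc.inter <| measurableSet_lt
    ((hm.comp (measurable_const_add y)).sub_const _).abs measurable_const

theorem ofReal_two_le_liminf_volume_closeShifts {h : ℝ → ℝ}
    (hc : ∀ u, Tendsto (fun y => h (y + u) - h y) atTop (𝓝 0))
    {y : ℕ → ℝ} (hy : Tendsto y atTop atTop) {δ : ℝ} (hδ : 0 < δ) :
    ENNReal.ofReal 2 ≤ liminf (fun n => volume (closeShifts h (y n) δ)) atTop := by
  have hsub : Icc (0 : ℝ) 2 ⊆ liminf (fun n => closeShifts h (y n) δ) atTop := by
    intro v hv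
    rw [mem_liminf_iff_eventually_mem]
    filter_upwards [(hc v).comp hy |>.abs |>.eventually (gt_mem_nhds (by simpa using hδ))]
      with n hn
    exact ⟨hv, by simpa using hn⟩
  calc ENNReal.ofReal 2 = volume (Icc (0 : ℝ) 2) := by simp
    _ ≤ _ := (measure_mono hsub).trans (measure_liminf_le_liminf_measure _ _)

-- A common point of `closeShifts h y δ` and `u +ᵥ closeShifts h (y + u) δ` would put `h (y + u)`
-- within `2 * δ` of `h y`; disjoint inside `[0, 3]`, the two sets have total measure at most 3.
theorem volume_closeShifts_add_le {h : ℝ → ℝ} (hm : Measurable h) {y u δ : ℝ}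
    (hu : u ∈ Icc (0 : ℝ) 1) (hgap : 2 * δ ≤ |h (y + u) - h y|) :
    volume (closeShifts h y δ) + volume (closeShifts h (y + u) δ) ≤ ENNReal.ofReal 3 := by
  have hdisj : Disjoint (closeShifts h y δ) (u +ᵥ closeShifts h (y + u) δ) := by
    rw [Set.disjoint_left]
    rintro _ ⟨-, hz⟩ ⟨w, ⟨-, hw⟩, rfl⟩
    simp only [mem_ofPred_eq, vadd_eq_add, ← add_assoc] at hz hw
    have := abs_sub_le (h (y + u)) (h (y + u + w)) (h y)
    rw [abs_sub_comm (h (y + u)) (h (y + u + w))] at this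
    linarith
  have hsub : closeShifts h y δ ∪ (u +ᵥ closeShifts h (y + u) δ) ⊆ Icc 0 3 := by
    rintro z (⟨⟨hz0, hz2⟩, -⟩ | ⟨w, ⟨⟨hw0, hw2⟩, -⟩, rfl⟩)
    · exact ⟨hz0, by linarith⟩
    · simp only [vadd_eq_add]
      exact ⟨by linarith [hu.1], by linarith [hu.2]⟩
  calc volume (closeShifts h y δ) + volume (closeShifts h (y + u) δ)
      = volume (closeShifts h y δ ∪ (u +ᵥ closeShifts h (y + u) δ)) := by
        rw [measure_union hdisj ((measurableSet_closeShifts hm _ _).const_vadd _), measure_vadd]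
    _ ≤ volume (Icc (0 : ℝ) 3) := measure_mono hsub
    _ = ENNReal.ofReal 3 := by simp

theorem Measurable.tendstoUniformlyOn_add_sub {h : ℝ → ℝ} (hm : Measurable h)
    (hc : ∀ u, Tendsto (fun y => h (y + u) - h y) atTop (𝓝 0)) :
    TendstoUniformlyOn (fun y u => h (y + u) - h y) 0 atTop (Icc 0 1) := by
  rw [Metric.tendstoUniformlyOn_iff]
  intro ε hε
  by_contra hcon
  obtain ⟨y, hy, hbad⟩ : ∃ y : ℕ → ℝ, (∀ n : ℕ, (n : ℝ) ≤ y n) ∧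
      ∀ n, ∃ u ∈ Icc (0 : ℝ) 1, ε ≤ |h (y n + u) - h (y n)| := by
    simp only [not_eventually, frequently_atTop, Pi.zero_apply, dist_zero_left, Real.norm_eq_abs,
      not_forall, not_lt] at hcon
    choose y hy u hu hbad using fun n : ℕ => hcon n
    exact ⟨y, hy, fun n => ⟨u n, hu n, hbad n⟩⟩
  choose u hu hbad using hbad
  have hyT : Tendsto y atTop atTop := tendsto_atTop_mono hy tendsto_natCast_atTop_atTop
  have hyuT : Tendsto (fun n => y n + u n) atTop atTop :=
    tendsto_atTop_mono (fun n => le_add_of_nonneg_right (hu n).1) hyT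
  have h32 : ENNReal.ofReal (3 / 2) < ENNReal.ofReal 2 := by
    rw [ENNReal.ofReal_lt_ofReal_iff] <;> norm_num
  have hlarge := (eventually_lt_of_lt_liminf
      (h32.trans_le (ofReal_two_le_liminf_volume_closeShifts hc hyT (half_pos hε)))).and
    (eventually_lt_of_lt_liminf
      (h32.trans_le (ofReal_two_le_liminf_volume_closeShifts hc hyuT (half_pos hε))))
  obtain ⟨n, hYn, hVn⟩ := hlarge.exists
  have hle := volume_closeShifts_add_le (y := y n) (δ := ε / 2) hm (hu n) (by linarith [hbad n])
  refine hle.not_gt ?_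
  calc ENNReal.ofReal 3 = ENNReal.ofReal (3 / 2) + ENNReal.ofReal (3 / 2) := by
        rw [← ENNReal.ofReal_add] <;> norm_num
    _ < _ := ENNReal.add_lt_add hYn hVn

theorem le_pow_mul_of_forall_Icc {f : ℝ → ℝ} {X b K : ℝ} (hX : 0 ≤ X) (hb : 1 ≤ b)
    (hK : 1 ≤ K) (hf : ∀ x ≥ X, 0 ≤ f x) (hloc : ∀ x ≥ X, ∀ c ∈ Icc 1 b, f (c * x) ≤ K * f x)
    (n : ℕ) {x : ℝ} (hx : X ≤ x) {l : ℝ} (hl : l ∈ Icc 1 (b ^ n)) :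
    f (l * x) ≤ K ^ n * f x := by
  induction n generalizing l with
  | zero =>
    obtain rfl : l = 1 := le_antisymm (by simpa using hl.2) hl.1
    simp
  | succ n ih =>
    rcases le_or_gt l b with hlb | hbl
    · calc f (l * x) ≤ K * f x := hloc x hx l ⟨hl.1, hlb⟩
        _ ≤ K ^ (n + 1) * f x := by
          gcongr
          · exact hf x hx
          · exact le_self_pow₀ hK n.succ_ne_zero
    · have hb0 : 0 < b := one_pos.trans_le hb
      have hl' : l / b ∈ Icc 1 (b ^ n) :=
        ⟨(one_le_div hb0).2 hbl.le, (div_le_iff₀ hb0).2 (pow_succ b n ▸ hl.2)⟩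
      have hx' : X ≤ l / b * x := hx.trans (le_mul_of_one_le_left (hX.trans hx) hl'.1)
      calc f (l * x) = f (b * (l / b * x)) := by rw [← mul_assoc, mul_div_cancel₀ _ hb0.ne']
        _ ≤ K * f (l / b * x) := hloc _ hx' b ⟨hb, le_rfl⟩
        _ ≤ K * (K ^ n * f x) := mul_le_mul_of_nonneg_left (ih hl') (zero_le_one.trans hK)
        _ = K ^ (n + 1) * f x := by ring

section SlowVariation

variable {L : ℝ → ℝ}

theorem tendsto_log_comp_exp_add_sub (hLpos : ∀ x > 0, 0 < L x)
    (hLsv : ∀ c > 0, Tendsto (fun x => L (c * x) / L x) atTop (𝓝 1)) (u : ℝ) :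
    Tendsto (fun y => log (L (exp (y + u))) - log (L (exp y))) atTop (𝓝 0) := by
  have := ((hLsv (exp u) (exp_pos u)).comp tendsto_exp_atTop).log one_ne_zero
  rw [log_one] at this
  refine this.congr fun y => ?_
  simp only [Function.comp_apply, exp_add]
  rw [log_div (hLpos _ (by positivity)).ne' (hLpos _ (exp_pos y)).ne', mul_comm]

theorem exists_forall_Icc_le_exp_mul (hLmeas : Measurable L) (hLpos : ∀ x > 0, 0 < L x)
    (hLsv : ∀ c > 0, Tendsto (fun x => L (c * x) / L x) atTop (𝓝 1)) {ε : ℝ} (hε : 0 < ε) :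
    ∃ X > 0, ∀ x ≥ X, ∀ c ∈ Icc 1 (exp 1), L (c * x) ≤ exp ε * L x := by
  have hunif := (Measurable.tendstoUniformlyOn_add_sub
    (measurable_log.comp (hLmeas.comp measurable_exp))
    (tendsto_log_comp_exp_add_sub hLpos hLsv))
  obtain ⟨Y, hY⟩ := (Metric.tendstoUniformlyOn_iff.1 hunif ε hε).exists_forall_of_atTop
  refine ⟨exp Y, exp_pos Y, fun x hx c hc => ?_⟩
  have hx0 : 0 < x := (exp_pos Y).trans_le hx
  have hc0 : 0 < c := one_pos.trans_le hc.1
  have hlogc : log c ∈ Icc (0 : ℝ) 1 :=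
    ⟨log_nonneg hc.1, (log_le_log hc0 hc.2).trans_eq (log_exp 1)⟩
  have hclose := hY (log x) ((le_log_iff_exp_le hx0).2 hx) (log c) hlogc
  simp only [Function.comp_apply, exp_add, exp_log hx0, exp_log hc0, Pi.zero_apply, dist_zero_left,
    Real.norm_eq_abs] at hclose
  calc L (c * x) = exp (log (L (x * c))) := by rw [mul_comm, exp_log (hLpos _ (by positivity))]
    _ ≤ exp (ε + log (L x)) := exp_le_exp.2 (by linarith [(abs_lt.1 hclose).2])
    _ = exp ε * L x := by rw [exp_add, exp_log (hLpos x hx0)]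

theorem exists_potter_bound (hLmeas : Measurable L) (hLpos : ∀ x > 0, 0 < L x)
    (hLsv : ∀ c > 0, Tendsto (fun x => L (c * x) / L x) atTop (𝓝 1)) {ε : ℝ} (hε : 0 < ε) :
    ∃ X > 0, ∀ x ≥ X, ∀ l ≥ 1, L (l * x) ≤ exp ε * l ^ ε * L x := by
  obtain ⟨X, hX, hloc⟩ := exists_forall_Icc_le_exp_mul hLmeas hLpos hLsv hε
  refine ⟨X, hX, fun x hx l hl => ?_⟩
  have hl0 : 0 < l := one_pos.trans_le hl
  set n := ⌈log l⌉₊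
  have hln : l ≤ exp 1 ^ n := by
    rw [← exp_nat_mul, mul_one, ← exp_log hl0]
    exact exp_le_exp.2 (Nat.le_ceil _)
  calc L (l * x) ≤ exp ε ^ n * L x :=
        le_pow_mul_of_forall_Icc hX.le (one_le_exp zero_le_one) (one_le_exp hε.le)
          (fun y hy => (hLpos y (hX.trans_le hy)).le) hloc n hx ⟨hl, hln⟩
    _ ≤ exp ε * l ^ ε * L x := by
      gcongr
      · exact (hLpos x (hX.trans_le hx)).le
      · rw [← exp_nat_mul, rpow_def_of_pos hl0, ← exp_add]
        refine exp_le_exp.2 ?_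
        nlinarith [Nat.ceil_lt_add_one (log_nonneg hl)]

theorem integral_Ioi_rpow_mul_eq (α : ℝ) {x : ℝ} (hx : 0 < x) (hLx : L x ≠ 0) :
    ∫ t in Ioi x, t ^ α * L t = x ^ (α + 1) * L x * ∫ s in Ioi 1, s ^ α * (L (x * s) / L x) := by
  have hscale := integral_comp_mul_left_Ioi (fun t => t ^ α * L t) 1 hx
  rw [mul_one, smul_eq_mul] at hscale
  calc ∫ t in Ioi x, t ^ α * L t = x * ∫ s in Ioi 1, (x * s) ^ α * L (x * s) := by
        rw [hscale, mul_inv_cancel_left₀ hx.ne']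
    _ = _ := by
      rw [rpow_add_one hx.ne', ← integral_const_mul, ← integral_const_mul]
      refine setIntegral_congr_fun measurableSet_Ioi fun s hs => ?_
      rw [mul_rpow hx.le (zero_le_one.trans (le_of_lt hs))]
      field_simp

theorem integrableOn_Ioi_rpow_mul_of_ratio {α x : ℝ} (hx : 0 < x)
    (h : IntegrableOn (fun s => s ^ α * (L (x * s) / L x)) (Ioi 1)) (hLx : L x ≠ 0) :
    IntegrableOn (fun t => t ^ α * L t) (Ioi x) := by
  have := (integrableOn_Ioi_comp_mul_left_iff (fun t => t ^ α * L t) 1 hx).1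
  rw [mul_one] at this
  refine this <|
    IntegrableOn.congr_fun (h.const_mul (x ^ α * L x)) (fun s hs => ?_) measurableSet_Ioi
  rw [mul_rpow hx.le (zero_le_one.trans (le_of_lt hs))]
  field_simp

theorem norm_rpow_mul_ratio_le (hLpos : ∀ x > 0, 0 < L x) {α ε x : ℝ} (hx : 0 < x)
    (hpot : ∀ l ≥ 1, L (l * x) ≤ exp ε * l ^ ε * L x) {s : ℝ} (hs : 1 ≤ s) :
    ‖s ^ α * (L (x * s) / L x)‖ ≤ exp ε * s ^ (α + ε) := by
  have hs0 : 0 < s := one_pos.trans_le hs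
  have hLx := hLpos x hx
  rw [norm_of_nonneg (by have := hLpos _ (mul_pos hx hs0); positivity), rpow_add hs0,
    ← mul_div_assoc, div_le_iff₀ hLx, mul_comm x s]
  calc s ^ α * L (s * x) ≤ s ^ α * (exp ε * s ^ ε * L x) := by gcongr; exact hpot s hs
    _ = exp ε * (s ^ α * s ^ ε) * L x := by ring

theorem tendsto_integral_rpow_mul_ratio (hLmeas : Measurable L) (hLpos : ∀ x > 0, 0 < L x)
    (hLsv : ∀ c > 0, Tendsto (fun x => L (c * x) / L x) atTop (𝓝 1)) {α ε X : ℝ}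
    (hαε : α + ε < -1) (hX : 0 < X)
    (hpot : ∀ x ≥ X, ∀ l ≥ 1, L (l * x) ≤ exp ε * l ^ ε * L x) :
    Tendsto (fun x => ∫ s in Ioi 1, s ^ α * (L (x * s) / L x)) atTop
      (𝓝 (∫ s in Ioi (1 : ℝ), s ^ α)) := by
  refine tendsto_integral_filter_of_dominated_convergence (fun s => exp ε * s ^ (α + ε))
    (.of_forall fun x => by fun_prop) ?_
    ((integrableOn_Ioi_rpow_of_lt hαε one_pos).const_mul _) ?_
  · filter_upwards [eventually_ge_atTop X] with x hx
    filter_upwards [self_mem_ae_restrict measurableSet_Ioi] with s hs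
    exact norm_rpow_mul_ratio_le hLpos (hX.trans_le hx) (hpot x hx) (le_of_lt hs)
  · filter_upwards [self_mem_ae_restrict measurableSet_Ioi] with s hs
    simpa [mul_comm] using (hLsv s (one_pos.trans hs)).const_mul (s ^ α)

end SlowVariation

theorem karamata_upper_general
    (L : ℝ → ℝ) (hLmeas : Measurable L) (hLpos : ∀ x > 0, 0 < L x)
    (hLsv : ∀ c > 0, Tendsto (fun x => L (c * x) / L x) atTop (nhds 1)) :
    ∀ α < (-1 : ℝ),
      (∀ᶠ x in atTop, IntegrableOn (fun t : ℝ => t ^ α * L t) (Set.Ici x)) ∧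
      Tendsto (fun x : ℝ => -(∫ t in Set.Ici x, t ^ α * L t) / (x ^ (α + 1) * L x))
        atTop (nhds (1 / (α + 1))) := by
  intro α hα
  have hαε : α + (-1 - α) / 2 < -1 := by linarith
  obtain ⟨X, hX, hpot⟩ := exists_potter_bound hLmeas hLpos hLsv (ε := (-1 - α) / 2) (by linarith)
  have hLx : ∀ x ≥ X, L x ≠ 0 := fun x hx => (hLpos x (hX.trans_le hx)).ne'
  have hratio : ∀ x ≥ X, IntegrableOn (fun s => s ^ α * (L (x * s) / L x)) (Ioi 1) :=
    fun x hx => ((integrableOn_Ioi_rpow_of_lt hαε one_pos).const_mul _).mono' (by fun_prop) <|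
      (ae_restrict_mem measurableSet_Ioi).mono fun s hs =>
        norm_rpow_mul_ratio_le hLpos (hX.trans_le hx) (hpot x hx) (le_of_lt hs)
  refine ⟨eventually_atTop.2 ⟨X, fun x hx => (integrableOn_Ici_iff_integrableOn_Ioi).2 <|
    integrableOn_Ioi_rpow_mul_of_ratio (hX.trans_le hx) (hratio x hx) (hLx x hx)⟩, ?_⟩
  have hlim := tendsto_integral_rpow_mul_ratio hLmeas hLpos hLsv hαε hX hpot
  rw [integral_Ioi_rpow_of_lt hα one_pos, one_rpow, neg_div] at hlim
  refine (neg_neg (1 / (α + 1)) ▸ hlim.neg).congr' ?_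
  filter_upwards [eventually_ge_atTop X] with x hx
  rw [integral_Ici_eq_integral_Ioi, integral_Ioi_rpow_mul_eq α (hX.trans_le hx) (hLx x hx),
    neg_div, mul_div_cancel_left₀ _
    (mul_ne_zero (rpow_pos_of_pos (hX.trans_le hx) _).ne' (hLx x hx))]

/-- **Lemma 1, part (4); Karamata's theorem.** Let `L : (0,∞) → (0,∞)` be a measurable slowly
varying function in Karamata's sense, locally integrable on `[A, ∞)` for some `A > 0`. Then for
every `α < -1`, the function `t ↦ t^α * L t` is integrable on `[x, ∞)` for all sufficiently
large `x`, and `-(∫_x^∞ t^α L(t) dt) / (x^(α+1) L(x)) → 1/(α+1)` as `x → ∞`. -/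
theorem karamata_upper
    (L : ℝ → ℝ) (hLmeas : Measurable L) (hLpos : ∀ x > 0, 0 < L x)
    (hLsv : ∀ c > 0, Tendsto (fun x => L (c * x) / L x) atTop (nhds 1))
    (A : ℝ) (hA : 0 < A) (hLint : LocallyIntegrableOn L (Set.Ici A)) :
    ∀ α < (-1 : ℝ),
      (∀ᶠ x in atTop, IntegrableOn (fun t : ℝ => t ^ α * L t) (Set.Ici x)) ∧
      Tendsto (fun x : ℝ => -(∫ t in Set.Ici x, t ^ α * L t) / (x ^ (α + 1) * L x))
        atTop (nhds (1 / (α + 1))) :=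
  karamata_upper_general L hLmeas hLpos hLsv
end

section
/- Let a > 0, let m ≥ 1 be an integer, and let L : (0,∞) → (0,∞) be measurable with 0 < ∫₀^∞ t^{−a−1} L(t) dt = 1/K < ∞. Then lim_{τ → 0⁺} τ^{2a} ∫₀¹ u^{a+m/2−1} (1−u)^{−a−1} L(τ^{−2}(u^{−1}−1)) du = 1/K. Equivalently, for any sequence τ_n → 0, ∫₀¹ u^{a+m/2−1}(1−u)^{−a−1} L(τ_n^{−2}(u^{−1}−1)) du = K^{−1} τ_n^{−2a} (1+o(1)). (Lemma 2.) -/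
/-!
The substitution `u = (1 + t τ²)⁻¹` maps `(0, ∞)` onto `(0, 1)` and turns
`τ^(2a) ∫₀¹ u^(a+m/2-1) (1-u)^(-a-1) L(τ⁻²(u⁻¹-1)) du` into
`∫₀^∞ (1 + t τ²)^(-m/2) t^(-a-1) L(t) dt`. The weight `(1 + t τ²)^(-m/2)` lies in `(0, 1]` and
tends to `1` pointwise as `τ → 0`, so dominated convergence with dominating function
`|t^(-a-1) L(t)|` gives the limit `∫₀^∞ t^(-a-1) L(t) dt = 1/K`.
-/

open Filter MeasureTheory Set Topology

lemma image_inv_one_add_mul_Ioi {c : ℝ} (hc : 0 < c) :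
    (fun t : ℝ => (1 + t * c)⁻¹) '' Ioi 0 = Ioo 0 1 := by
  ext u
  constructor
  · rintro ⟨t, ht : 0 < t, rfl⟩
    exact ⟨by positivity, inv_lt_one_of_one_lt₀ (by nlinarith [mul_pos ht hc])⟩
  · rintro ⟨hu0, hu1⟩
    have hu : 0 < u⁻¹ - 1 := sub_pos.mpr ((one_lt_inv₀ hu0).mpr hu1)
    refine ⟨(u⁻¹ - 1) / c, div_pos hu hc, ?_⟩
    simp only [div_mul_cancel₀ _ hc.ne', add_sub_cancel, inv_inv]

lemma injOn_inv_one_add_mul {c : ℝ} (hc : c ≠ 0) :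
    InjOn (fun t : ℝ => (1 + t * c)⁻¹) (Ioi 0) := fun _ _ _ _ h =>
  mul_right_cancel₀ hc (add_left_cancel (inv_injective h))

lemma rpow_mul_jacobian_inv_one_add_mul {a b c t : ℝ} (hc : 0 < c) (ht : 0 < t) :
    c ^ a * (|-c / (1 + t * c) ^ 2| *
        ((1 + t * c)⁻¹ ^ (a + b - 1) * (1 - (1 + t * c)⁻¹) ^ (-a - 1)))
      = (1 + t * c) ^ (-b) * t ^ (-a - 1) := by
  have hs : 0 < 1 + t * c := by positivity
  have hsub : 1 - (1 + t * c)⁻¹ = t * c / (1 + t * c) := by field_simp; ring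
  rw [hsub, abs_div, abs_neg, abs_of_pos hc, abs_of_pos (by positivity),
    Real.div_rpow (by positivity) hs.le, Real.mul_rpow ht.le hc.le, Real.inv_rpow hs.le,
    ← Real.rpow_natCast]
  -- the lone factor `c` becomes `c ^ 1`, so that every factor below turns into `exp (log _ * _)`
  nth_rw 2 [← Real.rpow_one c]
  simp only [div_eq_mul_inv, Real.rpow_def_of_pos hs, Real.rpow_def_of_pos hc,
    Real.rpow_def_of_pos ht, ← Real.exp_neg, ← Real.exp_add, Nat.cast_ofNat]
  rw [Real.exp_eq_exp]
  ring

lemma rpow_mul_integral_eq_integral_Ioi (a b : ℝ) (g : ℝ → ℝ) {c : ℝ} (hc : 0 < c) :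
    c ^ a * ∫ u in (0 : ℝ)..1, u ^ (a + b - 1) * (1 - u) ^ (-a - 1) * g ((u⁻¹ - 1) / c)
      = ∫ t in Ioi (0 : ℝ), (1 + t * c) ^ (-b) * (t ^ (-a - 1) * g t) := by
  have hderiv : ∀ t ∈ Ioi (0 : ℝ), HasDerivWithinAt (fun t : ℝ => (1 + t * c)⁻¹)
      (-c / (1 + t * c) ^ 2) (Ioi 0) t := fun t (ht : 0 < t) =>
    (((hasDerivAt_mul_const c).const_add 1).inv (by positivity)).hasDerivWithinAt
  rw [intervalIntegral.integral_of_le zero_le_one, integral_Ioc_eq_integral_Ioo,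
    ← image_inv_one_add_mul_Ioi hc, integral_image_eq_integral_abs_deriv_smul measurableSet_Ioi
      hderiv (injOn_inv_one_add_mul hc.ne'), ← integral_const_mul]
  refine setIntegral_congr_fun measurableSet_Ioi fun t (ht : 0 < t) => ?_
  have harg : ((1 + t * c)⁻¹⁻¹ - 1) / c = t := by field_simp; ring
  rw [smul_eq_mul, harg]
  linear_combination g t * rpow_mul_jacobian_inv_one_add_mul (b := b) hc ht

lemma tendsto_integral_one_add_mul_rpow_neg_mul {f : ℝ → ℝ} (hf : IntegrableOn f (Ioi 0))
    {b : ℝ} (hb : 0 ≤ b) :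
    Tendsto (fun c : ℝ => ∫ t in Ioi (0 : ℝ), (1 + t * c) ^ (-b) * f t) (𝓝[≥] 0)
      (𝓝 (∫ t in Ioi (0 : ℝ), f t)) := by
  have hweight : ∀ c ∈ Ici (0 : ℝ), ∀ t ∈ Ioi (0 : ℝ),
      0 < (1 + t * c) ^ (-b) ∧ (1 + t * c) ^ (-b) ≤ 1 := fun c (hc : 0 ≤ c) t (ht : 0 < t) =>
    ⟨by positivity, Real.rpow_le_one_of_one_le_of_nonpos (by nlinarith) (neg_nonpos.mpr hb)⟩
  refine tendsto_integral_filter_of_dominated_convergence (fun t => ‖f t‖) ?_ ?_ hf.norm ?_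
  · refine Eventually.of_forall fun c => (Measurable.aestronglyMeasurable ?_).mul
      hf.aestronglyMeasurable
    fun_prop
  · filter_upwards [self_mem_nhdsWithin] with c hc
    filter_upwards [ae_restrict_mem measurableSet_Ioi] with t ht
    obtain ⟨hpos, hle⟩ := hweight c hc t ht
    rw [norm_mul, Real.norm_of_nonneg hpos.le]
    exact mul_le_of_le_one_left (norm_nonneg _) hle
  · refine Eventually.of_forall fun t => ?_
    have hcont : ContinuousAt (fun c : ℝ => (1 + t * c) ^ (-b)) 0 :=
      ((continuous_const.add (continuous_const.mul continuous_id)).continuousAt).rpow_const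
        (Or.inl (by simp))
    simpa using (hcont.tendsto.mono_left nhdsWithin_le_nhds).mul_const (f t)

theorem lemma2_integral_asymptotics_general
    (a : ℝ) (m : ℕ)
    (L : ℝ → ℝ)
    (K : ℝ)
    (hLint : IntegrableOn (fun t : ℝ => t ^ (-a - 1) * L t) (Set.Ioi 0))
    (hKval : ∫ t in Set.Ioi (0 : ℝ), t ^ (-a - 1) * L t = 1 / K) :
    Tendsto
      (fun τ : ℝ => τ ^ (2 * a) *
        ∫ u in (0 : ℝ)..1,
          u ^ (a + (m : ℝ) / 2 - 1) * (1 - u) ^ (-a - 1) * L ((u⁻¹ - 1) / τ ^ 2))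
      (nhdsWithin 0 (Set.Ioi 0)) (nhds (1 / K)) := by
  have hsq : Tendsto (fun τ : ℝ => τ ^ 2) (𝓝[>] 0) (𝓝[≥] 0) :=
    tendsto_nhdsWithin_of_tendsto_nhds_of_eventually_within _
      ((continuous_pow 2).tendsto' 0 0 (zero_pow two_ne_zero) |>.mono_left nhdsWithin_le_nhds)
      (Eventually.of_forall fun τ => sq_nonneg τ)
  have hlim := (tendsto_integral_one_add_mul_rpow_neg_mul hLint
    (div_nonneg m.cast_nonneg zero_le_two)).comp hsq
  rw [hKval] at hlim
  refine hlim.congr' ?_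
  filter_upwards [self_mem_nhdsWithin] with τ (hτ : 0 < τ)
  rw [Function.comp_apply, ← rpow_mul_integral_eq_integral_Ioi a _ L (pow_pos hτ 2),
    ← Real.rpow_natCast, ← Real.rpow_mul hτ.le, Nat.cast_ofNat]

/-- **Lemma 2.** Let `a > 0`, let `m ≥ 1` be an integer, and let `L : (0,∞) → (0,∞)` be measurable
with `0 < ∫₀^∞ t^(-a-1) L(t) dt = 1/K < ∞`. Then
`τ^(2a) ∫₀¹ u^(a+m/2-1) (1-u)^(-a-1) L(τ⁻²(u⁻¹-1)) du → 1/K` as `τ → 0⁺`. -/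
theorem lemma2_integral_asymptotics
    (a : ℝ) (ha : 0 < a) (m : ℕ) (hm : 1 ≤ m)
    (L : ℝ → ℝ) (hLmeas : Measurable L) (hLpos : ∀ x > 0, 0 < L x)
    (K : ℝ) (hK : 0 < K)
    (hLint : IntegrableOn (fun t : ℝ => t ^ (-a - 1) * L t) (Set.Ioi 0))
    (hKval : ∫ t in Set.Ioi (0 : ℝ), t ^ (-a - 1) * L t = 1 / K) :
    Tendsto
      (fun τ : ℝ => τ ^ (2 * a) *
        ∫ u in (0 : ℝ)..1,
          u ^ (a + (m : ℝ) / 2 - 1) * (1 - u) ^ (-a - 1) * L ((u⁻¹ - 1) / τ ^ 2))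
      (nhdsWithin 0 (Set.Ioi 0)) (nhds (1 / K)) :=
  lemma2_integral_asymptotics_general a m L K hLint hKval
end

section
/- For every real r ≥ 1 and every real c > r + 1, the incomplete gamma integral satisfies e^{−c} c^{r−1} ≤ ∫_c^∞ e^{−u} u^{r−1} du ≤ r e^{−c} c^{r−1}. (Lemma 5; due to Gabcke.) -/
/-!
With `f u = e^(-u) u^s` and `s = r - 1 ≥ 0`, one has `-f'(u) = f(u) (1 - s/u)`, so integrating
over `(c, ∞)` gives `f(c) = ∫ f(u) (1 - s/u) du`. On `u > c` the factor `1 - s/u` lies between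
`1 - s/c` and `1`, hence `(1 - s/c) ∫ f ≤ f(c) ≤ ∫ f`; finally `r (1 - s/c) ≥ 1` as soon as `c ≥ r`.
-/

open Real MeasureTheory Set Filter Asymptotics

theorem integrableOn_Ioi_exp_neg_mul_rpow (s : ℝ) {c : ℝ} (hc : 0 < c) :
    IntegrableOn (fun u => exp (-u) * u ^ s) (Ioi c) := by
  refine integrable_of_isBigO_exp_neg (b := 1 / 2) one_half_pos (fun u hu => ?_) ?_
  · exact ((continuous_exp.comp continuous_neg).continuousAt.mul
      (continuousAt_rpow_const u s (Or.inl (hc.trans_le hu).ne'))).continuousWithinAt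
  · have := ((isLittleO_rpow_exp_pos_mul_atTop s one_half_pos).mul_isBigO
      (isBigO_refl (fun u : ℝ => exp (-u)) atTop)).isBigO
    refine (this.congr_left fun u => mul_comm _ _).congr_right fun u => ?_
    rw [← exp_add]; ring_nf

theorem integrableOn_Ioi_exp_neg_mul_rpow_mul_one_sub_div (s : ℝ) {c : ℝ} (hc : 0 < c) :
    IntegrableOn (fun u => exp (-u) * u ^ s * (1 - s / u)) (Ioi c) := by
  have hsplit : EqOn (fun u => exp (-u) * u ^ s - s * (exp (-u) * u ^ (s - 1)))
      (fun u => exp (-u) * u ^ s * (1 - s / u)) (Ioi c) := fun u hu => by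
    dsimp only
    rw [rpow_sub_one (hc.trans hu).ne']
    field_simp
  exact ((integrableOn_Ioi_exp_neg_mul_rpow s hc).sub
    ((integrableOn_Ioi_exp_neg_mul_rpow (s - 1) hc).const_mul s)).congr_fun hsplit measurableSet_Ioi

theorem hasDerivAt_exp_neg_mul_rpow (s : ℝ) {u : ℝ} (hu : 0 < u) :
    HasDerivAt (fun x => exp (-x) * x ^ s) (-(exp (-u) * u ^ s * (1 - s / u))) u := by
  have hexp : HasDerivAt (fun x => exp (-x)) (-exp (-u)) u := by
    simpa using (hasDerivAt_neg u).exp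
  refine (hexp.mul (hasDerivAt_rpow_const (p := s) (Or.inl hu.ne'))).congr_deriv ?_
  rw [rpow_sub_one hu.ne']
  field_simp
  ring

theorem integral_Ioi_exp_neg_mul_rpow_mul_one_sub_div (s : ℝ) {c : ℝ} (hc : 0 < c) :
    ∫ u in Ioi c, exp (-u) * u ^ s * (1 - s / u) = exp (-c) * c ^ s := by
  have hlim : Tendsto (fun u => exp (-u) * u ^ s) atTop (nhds 0) := by
    simpa [mul_comm] using tendsto_rpow_mul_exp_neg_mul_atTop_nhds_zero s 1 one_pos
  have hftc := integral_Ioi_of_hasDerivAt_of_tendsto'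
    (fun u hu => hasDerivAt_exp_neg_mul_rpow s (hc.trans_le hu))
    (integrableOn_Ioi_exp_neg_mul_rpow_mul_one_sub_div s hc).neg hlim
  rw [integral_neg] at hftc
  linarith

theorem exp_neg_mul_rpow_le_integral_Ioi {s c : ℝ} (hs : 0 ≤ s) (hc : 0 < c) :
    exp (-c) * c ^ s ≤ ∫ u in Ioi c, exp (-u) * u ^ s := by
  rw [← integral_Ioi_exp_neg_mul_rpow_mul_one_sub_div s hc]
  refine setIntegral_mono_on (integrableOn_Ioi_exp_neg_mul_rpow_mul_one_sub_div s hc)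
    (integrableOn_Ioi_exp_neg_mul_rpow s hc) measurableSet_Ioi fun u hu => ?_
  have hu : 0 < u := hc.trans hu
  have : 0 ≤ exp (-u) * u ^ s := by positivity
  have : 0 ≤ s / u := by positivity
  nlinarith

theorem one_sub_div_mul_integral_Ioi_exp_neg_mul_rpow_le {s c : ℝ} (hs : 0 ≤ s) (hc : 0 < c) :
    (1 - s / c) * ∫ u in Ioi c, exp (-u) * u ^ s ≤ exp (-c) * c ^ s := by
  rw [← integral_Ioi_exp_neg_mul_rpow_mul_one_sub_div s hc, ← integral_const_mul]
  refine setIntegral_mono_on ((integrableOn_Ioi_exp_neg_mul_rpow s hc).const_mul _)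
    (integrableOn_Ioi_exp_neg_mul_rpow_mul_one_sub_div s hc) measurableSet_Ioi fun u hu => ?_
  have hu : c < u := hu
  have : 0 ≤ exp (-u) * u ^ s := by have := hc.trans hu; positivity
  have : s / u ≤ s / c := div_le_div_of_nonneg_left hs hc hu.le
  nlinarith

/-- **Lemma 5 (Gabcke).** For every real `r ≥ 1` and every real `c > r + 1`, the upper incomplete
gamma integral satisfies `e^(-c) c^(r-1) ≤ ∫_c^∞ e^(-u) u^(r-1) du ≤ r e^(-c) c^(r-1)`. -/
theorem incomplete_gamma_bounds (r : ℝ) (hr : 1 ≤ r) (c : ℝ) (hc : r + 1 < c) :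
    Real.exp (-c) * c ^ (r - 1) ≤ (∫ u in Set.Ioi c, Real.exp (-u) * u ^ (r - 1)) ∧
    (∫ u in Set.Ioi c, Real.exp (-u) * u ^ (r - 1)) ≤ r * (Real.exp (-c) * c ^ (r - 1)) := by
  have hs : 0 ≤ r - 1 := by linarith
  have hc₀ : 0 < c := by linarith
  set I := ∫ u in Set.Ioi c, Real.exp (-u) * u ^ (r - 1)
  have hlower : exp (-c) * c ^ (r - 1) ≤ I := exp_neg_mul_rpow_le_integral_Ioi hs hc₀
  have hupper := one_sub_div_mul_integral_Ioi_exp_neg_mul_rpow_le hs hc₀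
  have hI : 0 ≤ I := (by positivity : (0 : ℝ) ≤ exp (-c) * c ^ (r - 1)).trans hlower
  have hfactor : 1 ≤ r * (1 - (r - 1) / c) := by
    rw [mul_one_sub, le_sub_comm, ← mul_div_assoc, div_le_iff₀ hc₀]
    nlinarith
  refine ⟨hlower, ?_⟩
  calc I ≤ r * (1 - (r - 1) / c) * I := le_mul_of_one_le_left hI hfactor
    _ ≤ r * (exp (-c) * c ^ (r - 1)) := by rw [mul_assoc]; gcongr
end

section
/- Let Z₁, …, Z_m be independent random variables on a probability space each taking values in {0,1}, with p_i = E[Z_i], Z = Σ_{i=1}^m Z_i, μ = Σ_{i=1}^m p_i, and p = μ/m, and assume 0 < p < 1. Then for every λ with 0 < λ < m − μ, P(Z ≥ μ + λ) ≤ exp(−m · H_p(p + λ/m)). (Lemma 6, upper-tail generalized Chernoff–Hoeffding bound.) -/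
open MeasureTheory ProbabilityTheory

/-- Relative entropy of `x` with respect to `p`:
`H_p(x) = x log(x/p) + (1-x) log((1-x)/(1-p))`. -/
noncomputable def relEntropy (p x : ℝ) : ℝ :=
  x * Real.log (x / p) + (1 - x) * Real.log ((1 - x) / (1 - p))

/-!
Chernoff's method. By Markov's inequality applied to `exp (t Z)`, `P(Z ≥ m x)` is at most
`exp (-t m x) E[exp (t Z)]`. By independence the moment generating function factors into
`∏ (1 + (eᵗ - 1) pᵢ)`, which AM-GM bounds by `(1 + (eᵗ - 1) p)ᵐ`. At the optimal `t`, where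
`eᵗ = x (1 - p) / (p (1 - x))`, the bound `(exp (-t x) (1 + (eᵗ - 1) p))ᵐ` equals
`exp (-m H_p(x))`.
-/

open Real Finset

theorem Real.prod_le_arith_mean_pow_card {ι : Type*} (s : Finset ι) (z : ι → ℝ)
    (hz : ∀ i ∈ s, 0 ≤ z i) : ∏ i ∈ s, z i ≤ ((∑ i ∈ s, z i) / #s) ^ #s := by
  rcases s.eq_empty_or_nonempty with rfl | hs
  · simp
  have hgm := geom_mean_le_arith_mean s (fun _ ↦ 1) z (by simp) (by simpa using hs) hz
  simp only [rpow_one, sum_const, nsmul_eq_mul, mul_one, one_mul] at hgm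
  calc ∏ i ∈ s, z i = ((∏ i ∈ s, z i) ^ ((#s : ℝ)⁻¹)) ^ #s :=
        (rpow_inv_natCast_pow (prod_nonneg hz) hs.card_pos.ne').symm
    _ ≤ ((∑ i ∈ s, z i) / #s) ^ #s := pow_le_pow_left₀ (rpow_nonneg (prod_nonneg hz) _) hgm _

section Bernoulli

variable {Ω : Type*} [MeasurableSpace Ω] {μ : Measure Ω} [IsProbabilityMeasure μ]

theorem mgf_eq_of_ae_eq_zero_or_eq_one {X : Ω → ℝ} (hXm : AEMeasurable X μ)
    (hX : ∀ᵐ ω ∂μ, X ω = 0 ∨ X ω = 1) (t : ℝ) :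
    mgf X μ t = 1 + (exp t - 1) * μ[X] := by
  have hint : Integrable X μ := .of_mem_Icc 0 1 hXm <| hX.mono fun ω h ↦ by
    rcases h with h | h <;> simp [h]
  have hexp : (fun ω ↦ exp (t * X ω)) =ᵐ[μ] fun ω ↦ 1 + (exp t - 1) * X ω :=
    hX.mono fun ω h ↦ by rcases h with h | h <;> simp [h]
  rw [mgf, integral_congr_ae hexp, integral_add (integrable_const 1) (hint.const_mul _),
    integral_const_mul]
  simp

variable {ι : Type*} [Fintype ι] {X : ι → Ω → ℝ}

theorem mgf_sum_le_of_ae_eq_zero_or_eq_one (hXm : ∀ i, AEMeasurable (X i) μ)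
    (hX : ∀ i, ∀ᵐ ω ∂μ, X i ω = 0 ∨ X i ω = 1) (hindep : iIndepFun X μ) (t : ℝ) :
    mgf (∑ i, X i) μ t ≤
      (1 + (exp t - 1) * ((∑ i, μ[X i]) / Fintype.card ι)) ^ Fintype.card ι := by
  rcases isEmpty_or_nonempty ι with hι | hι
  · simp
  rw [hindep.mgf_sum₀ hXm]
  refine (prod_le_arith_mean_pow_card univ _ fun i _ ↦ mgf_nonneg).trans_eq ?_
  have hcard : (Fintype.card ι : ℝ) ≠ 0 := Nat.cast_ne_zero.2 Fintype.card_ne_zero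
  simp_rw [mgf_eq_of_ae_eq_zero_or_eq_one (hXm _) (hX _), sum_add_distrib, ← mul_sum,
    card_univ, sum_const, card_univ, nsmul_eq_mul, mul_one]
  field_simp

theorem measureReal_card_mul_le_sum_le (hXm : ∀ i, AEMeasurable (X i) μ)
    (hX : ∀ i, ∀ᵐ ω ∂μ, X i ω = 0 ∨ X i ω = 1) (hindep : iIndepFun X μ) {t : ℝ} (ht : 0 ≤ t)
    (x : ℝ) :
    μ.real {ω | Fintype.card ι * x ≤ ∑ i, X i ω} ≤
      (exp (-(t * x)) * (1 + (exp t - 1) * ((∑ i, μ[X i]) / Fintype.card ι))) ^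
        Fintype.card ι := by
  have hsum_le : ∀ᵐ ω ∂μ, (∑ i, X i) ω ≤ Fintype.card ι := by
    filter_upwards [ae_all_iff.2 hX] with ω hω
    simpa [Finset.sum_apply] using
      sum_le_card_nsmul univ (fun i ↦ X i ω) 1 fun i _ ↦ by rcases hω i with h | h <;> simp [h]
  have hchernoff := measure_ge_le_exp_mul_mgf (Fintype.card ι * x) ht
    (integrable_exp_mul_of_le t _ ht (by fun_prop) hsum_le)
  simp only [Finset.sum_apply] at hchernoff
  refine hchernoff.trans ?_
  rw [mul_pow, ← exp_nat_mul, show -t * (Fintype.card ι * x) = Fintype.card ι * -(t * x) by ring]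
  gcongr
  exact mgf_sum_le_of_ae_eq_zero_or_eq_one hXm hX hindep t

end Bernoulli

theorem exp_neg_relEntropy {p x t : ℝ} (hp0 : 0 < p) (hp1 : p < 1) (hx0 : 0 < x) (hx1 : x < 1)
    (ht : t = log (x / p) - log ((1 - x) / (1 - p))) :
    exp (-relEntropy p x) = exp (-(t * x)) * (1 + (exp t - 1) * p) := by
  have hp1' : 0 < 1 - p := by linarith
  have hx1' : 0 < 1 - x := by linarith
  have hmgf : 1 + (exp t - 1) * p = exp (-log ((1 - x) / (1 - p))) := by
    rw [ht, exp_neg, exp_sub, exp_log (by positivity), exp_log (by positivity)]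
    field_simp
    ring
  rw [hmgf, ← exp_add, relEntropy, ht]
  congr 1
  ring

/-- **Lemma 6, upper tail (generalized Chernoff–Hoeffding bound).** Let `Z₁, …, Z_m` be independent
`{0,1}`-valued random variables with `p_i = E[Z_i]`, `Z = Σ Z_i`, `μ = Σ p_i`, `p = μ/m ∈ (0,1)`.
Then for `0 < λ < m - μ`, `P(Z ≥ μ + λ) ≤ exp(-m H_p(p + λ/m))`. -/
theorem chernoff_hoeffding_upper
    {Ω : Type*} [MeasureSpace Ω] [IsProbabilityMeasure (ℙ : Measure Ω)]
    (m : ℕ) (hm : 0 < m) (Z : Fin m → Ω → ℝ)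
    (hZmeas : ∀ i, Measurable (Z i))
    (hZ01 : ∀ i, ∀ ω, Z i ω = 0 ∨ Z i ω = 1)
    (hindep : iIndepFun Z ℙ)
    (μ p : ℝ) (hμ : μ = ∑ i, ∫ ω, Z i ω) (hp : p = μ / m)
    (hp0 : 0 < p) (hp1 : p < 1)
    (lam : ℝ) (hlam0 : 0 < lam) (hlam : lam < m - μ) :
    (ℙ {ω | μ + lam ≤ ∑ i, Z i ω}).toReal ≤
      Real.exp (-(m * relEntropy p (p + lam / m))) := by
  have hm' : (0 : ℝ) < m := Nat.cast_pos.2 hm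
  set x := p + lam / m
  have hμlam : μ + lam = m * x := by simp only [x, hp]; field_simp
  have hpx : p < x := lt_add_of_pos_right p (div_pos hlam0 hm')
  have hx1 : x < 1 := by
    have : lam / m < 1 - p := by rw [div_lt_iff₀ hm', hp]; field_simp; linarith
    linarith
  have ht : 0 ≤ log (x / p) - log ((1 - x) / (1 - p)) := sub_nonneg.2 <|
    (log_nonpos (by bound) ((div_le_one (by linarith)).2 (by linarith))).trans
      (log_nonneg ((one_le_div hp0).2 hpx.le))
  have hmean : (∑ i, ∫ ω, Z i ω) / m = p := by rw [← hμ, hp]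
  have hbound := measureReal_card_mul_le_sum_le (μ := ℙ)
    (fun i ↦ (hZmeas i).aemeasurable) (fun i ↦ ae_of_all _ (hZ01 i)) hindep ht x
  rw [Fintype.card_fin, hmean, ← exp_neg_relEntropy hp0 hp1 (hp0.trans hpx) hx1 rfl,
    ← exp_nat_mul, mul_neg] at hbound
  rw [hμlam]
  exact hbound
end

section
/- Let m ≥ 2 be an integer and let M be a real number with M > m + 2. Let μ_m be the Gamma distribution on ℝ with shape parameter m/2 and rate parameter 1/2 (equivalently, the chi-squared distribution with m degrees of freedom). Then e^{−M/2} (M/2)^{m/2−1} / Γ(m/2) ≤ μ_m((M, ∞)) ≤ (m/2) · e^{−M/2} (M/2)^{m/2−1} / Γ(m/2). (Two-sided tail bound (5.31) for central chi-squared distributions, used in the proof of Theorem 1.) -/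
/-!
On `(0, ∞)` the Gamma density `f` with shape `a` and rate `r` satisfies
`-f' = (r - (a - 1) / x) f`, so `∫_M^∞ (r - (a - 1) / x) f = f M`. For `a ≥ 1` the factor
`r - (a - 1) / x` lies between `r - (a - 1) / M` and `r` on `(M, ∞)`, which sandwiches the tail:
`f M / r ≤ ∫_M^∞ f ≤ f M / (r - (a - 1) / M) ≤ a f M / r`, the last step once `a ≤ r M`.
For `a = m / 2`, `r = 1 / 2` the quantity `f M / r` is `e^(-M/2) (M/2)^(m/2-1) / Γ(m/2)`.
-/

open MeasureTheory ProbabilityTheory Real Set Filter Topology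

namespace ProbabilityTheory

variable {a r : ℝ}

lemma integrable_gammaPDFReal (ha : 0 < a) (hr : 0 < r) : Integrable (gammaPDFReal a r) := by
  refine ⟨(measurable_gammaPDFReal a r).aestronglyMeasurable, ?_⟩
  rw [hasFiniteIntegral_iff_ofReal (ae_of_all _ (gammaPDFReal_nonneg ha hr))]
  exact (lintegral_gammaPDF_eq_one ha hr).trans_lt ENNReal.one_lt_top

lemma gammaMeasure_Ioi (ha : 0 < a) (hr : 0 < r) (M : ℝ) :
    gammaMeasure a r (Ioi M) = ENNReal.ofReal (∫ x in Ioi M, gammaPDFReal a r x) := by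
  rw [gammaMeasure, withDensity_apply _ measurableSet_Ioi, ofReal_integral_eq_lintegral_ofReal
    (integrable_gammaPDFReal ha hr).integrableOn (ae_of_all _ (gammaPDFReal_nonneg ha hr))]
  rfl

lemma hasDerivAt_gammaPDFReal {x : ℝ} (hx : 0 < x) :
    HasDerivAt (gammaPDFReal a r) (((a - 1) / x - r) * gammaPDFReal a r x) x := by
  have hpow : HasDerivAt (fun y ↦ y ^ (a - 1)) ((a - 1) * x ^ (a - 1) / x) x := by
    simpa [rpow_sub_one hx.ne', mul_div_assoc] using
      hasDerivAt_rpow_const (p := a - 1) (Or.inl hx.ne')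
  have hexp : HasDerivAt (fun y ↦ exp (-(r * y))) (-r * exp (-(r * x))) x := by
    simpa [mul_comm] using ((hasDerivAt_id x).const_mul r).neg.exp
  have hformula := (hpow.const_mul (r ^ a / Gamma a)).mul hexp
  have heq : gammaPDFReal a r =ᶠ[𝓝 x]
      fun y ↦ r ^ a / Gamma a * y ^ (a - 1) * exp (-(r * y)) := by
    filter_upwards [lt_mem_nhds hx] with y hy using if_pos hy.le
  refine (hformula.congr_of_eventuallyEq heq).congr_deriv ?_
  simp only [gammaPDFReal, if_pos hx.le]
  field_simp
  ring

lemma hasDerivAt_neg_gammaPDFReal {x : ℝ} (hx : 0 < x) :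
    HasDerivAt (fun y ↦ -gammaPDFReal a r y) ((r - (a - 1) / x) * gammaPDFReal a r x) x :=
  (hasDerivAt_gammaPDFReal hx).fun_neg.congr_deriv (by ring)

lemma tendsto_gammaPDFReal_atTop (hr : 0 < r) : Tendsto (gammaPDFReal a r) atTop (𝓝 0) := by
  have h := (tendsto_rpow_mul_exp_neg_mul_atTop_nhds_zero (a - 1) r hr).const_mul (r ^ a / Gamma a)
  rw [mul_zero] at h
  refine h.congr' ?_
  filter_upwards [eventually_ge_atTop 0] with x hx
  simp [gammaPDFReal, if_pos hx, mul_assoc]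

lemma rate_sub_div_mul_gammaPDFReal_nonneg (ha : 0 < a) (hr : 0 < r) {x : ℝ} (hx : 0 < x)
    (hax : a - 1 ≤ r * x) : 0 ≤ (r - (a - 1) / x) * gammaPDFReal a r x := by
  refine mul_nonneg ?_ (gammaPDFReal_nonneg ha hr x)
  rw [sub_nonneg, div_le_iff₀ hx]
  linarith

variable {M : ℝ}

lemma integrableOn_rate_sub_div_mul_gammaPDFReal (ha : 0 < a) (hr : 0 < r) (hM : 0 < M)
    (haM : a - 1 ≤ r * M) :
    IntegrableOn (fun x ↦ (r - (a - 1) / x) * gammaPDFReal a r x) (Ioi M) := by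
  refine integrableOn_Ioi_deriv_of_nonneg'
    (fun x hx ↦ hasDerivAt_neg_gammaPDFReal (hM.trans_le hx))
    (fun x hx ↦ rate_sub_div_mul_gammaPDFReal_nonneg ha hr (hM.trans hx)
      (haM.trans (mul_le_mul_of_nonneg_left hx.le hr.le)))
    (tendsto_gammaPDFReal_atTop hr).neg

lemma integral_Ioi_rate_sub_div_mul_gammaPDFReal (ha : 0 < a) (hr : 0 < r) (hM : 0 < M)
    (haM : a - 1 ≤ r * M) :
    ∫ x in Ioi M, (r - (a - 1) / x) * gammaPDFReal a r x = gammaPDFReal a r M := by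
  rw [integral_Ioi_of_hasDerivAt_of_tendsto'
    (fun x hx ↦ hasDerivAt_neg_gammaPDFReal (hM.trans_le hx))
    (integrableOn_rate_sub_div_mul_gammaPDFReal ha hr hM haM) (tendsto_gammaPDFReal_atTop hr).neg]
  ring

lemma gammaPDFReal_div_le_integral_Ioi (ha : 1 ≤ a) (hr : 0 < r) (hM : 0 < M)
    (haM : a - 1 ≤ r * M) : gammaPDFReal a r M / r ≤ ∫ x in Ioi M, gammaPDFReal a r x := by
  have ha0 : 0 < a := by linarith
  rw [div_le_iff₀' hr, ← integral_const_mul,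
    ← integral_Ioi_rate_sub_div_mul_gammaPDFReal ha0 hr hM haM]
  refine setIntegral_mono_on (integrableOn_rate_sub_div_mul_gammaPDFReal ha0 hr hM haM)
    ((integrable_gammaPDFReal ha0 hr).integrableOn.const_mul r) measurableSet_Ioi
    fun x hx ↦ mul_le_mul_of_nonneg_right ?_ (gammaPDFReal_nonneg ha0 hr x)
  have : 0 ≤ (a - 1) / x := div_nonneg (by linarith) (hM.trans hx).le
  linarith

lemma integral_Ioi_gammaPDFReal_le (ha : 1 ≤ a) (hr : 0 < r) (hM : 0 < M) (haM : a ≤ r * M) :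
    ∫ x in Ioi M, gammaPDFReal a r x ≤ a * (gammaPDFReal a r M / r) := by
  have ha0 : 0 < a := by linarith
  have haM' : a - 1 ≤ r * M := by linarith
  set c := r - (a - 1) / M
  have hc : r ≤ a * c := by
    have hgap : a * c - r = (a - 1) * (r * M - a) / M := by
      simp only [c]
      field_simp
      ring
    have : 0 ≤ (a - 1) * (r * M - a) / M :=
      div_nonneg (mul_nonneg (by linarith) (by linarith)) hM.le
    linarith
  have hslope : c * ∫ x in Ioi M, gammaPDFReal a r x ≤ gammaPDFReal a r M := by
    rw [← integral_const_mul,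
      ← integral_Ioi_rate_sub_div_mul_gammaPDFReal ha0 hr hM haM']
    refine setIntegral_mono_on ((integrable_gammaPDFReal ha0 hr).integrableOn.const_mul c)
      (integrableOn_rate_sub_div_mul_gammaPDFReal ha0 hr hM haM')
      measurableSet_Ioi
      fun x hx ↦ mul_le_mul_of_nonneg_right ?_ (gammaPDFReal_nonneg ha0 hr x)
    exact sub_le_sub_left (div_le_div_of_nonneg_left (by linarith) hM hx.le) r
  have hint : 0 ≤ ∫ x in Ioi M, gammaPDFReal a r x :=
    setIntegral_nonneg measurableSet_Ioi fun x _ ↦ gammaPDFReal_nonneg ha0 hr x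
  rw [mul_div_assoc', le_div_iff₀' hr]
  calc r * ∫ x in Ioi M, gammaPDFReal a r x ≤ a * c * ∫ x in Ioi M, gammaPDFReal a r x :=
        mul_le_mul_of_nonneg_right hc hint
    _ ≤ a * gammaPDFReal a r M := by
        rw [mul_assoc]; exact mul_le_mul_of_nonneg_left hslope ha0.le

lemma gammaPDFReal_div_rate (hr : 0 < r) {x : ℝ} (hx : 0 ≤ x) :
    gammaPDFReal a r x / r = exp (-(r * x)) * (r * x) ^ (a - 1) / Gamma a := by
  rw [gammaPDFReal, if_pos hx, mul_rpow hr.le hx, rpow_sub_one hr.ne']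
  field_simp

end ProbabilityTheory

/-- **Two-sided chi-squared tail bound (5.31), used in the proof of Theorem 1.** Let `m ≥ 2` be an
integer and `M > m + 2`. Let `μ_m` be the Gamma distribution with shape `m/2` and rate `1/2`
(the chi-squared distribution with `m` degrees of freedom). Then
`e^(-M/2) (M/2)^(m/2-1) / Γ(m/2) ≤ μ_m((M,∞)) ≤ (m/2) e^(-M/2) (M/2)^(m/2-1) / Γ(m/2)`. -/
theorem chi_squared_tail_bounds (m : ℕ) (hm : 2 ≤ m) (M : ℝ) (hM : (m : ℝ) + 2 < M) :
    ENNReal.ofReal (Real.exp (-M / 2) * (M / 2) ^ ((m : ℝ) / 2 - 1) / Real.Gamma ((m : ℝ) / 2)) ≤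
        gammaMeasure ((m : ℝ) / 2) (1 / 2) (Set.Ioi M) ∧
      gammaMeasure ((m : ℝ) / 2) (1 / 2) (Set.Ioi M) ≤
        ENNReal.ofReal ((m : ℝ) / 2 *
          (Real.exp (-M / 2) * (M / 2) ^ ((m : ℝ) / 2 - 1) / Real.Gamma ((m : ℝ) / 2))) := by
  have hm' : (2 : ℝ) ≤ m := by exact_mod_cast hm
  have hM0 : 0 < M := by linarith
  have hdensity : gammaPDFReal ((m : ℝ) / 2) (1 / 2) M / (1 / 2) =
      exp (-M / 2) * (M / 2) ^ ((m : ℝ) / 2 - 1) / Gamma ((m : ℝ) / 2) := by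
    rw [gammaPDFReal_div_rate one_half_pos hM0.le, one_div_mul_eq_div, neg_div]
  rw [gammaMeasure_Ioi (by positivity) one_half_pos, ← hdensity]
  exact ⟨ENNReal.ofReal_le_ofReal
      (gammaPDFReal_div_le_integral_Ioi (by linarith) one_half_pos hM0 (by linarith)),
    ENNReal.ofReal_le_ofReal
      (integral_Ioi_gammaPDFReal_le (by linarith) one_half_pos hM0 (by linarith))⟩
end
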